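/- arXiv:1810.05832 — 2 statements merged into one kernel-verified Lean document; each statement's English description precedes it below -/
import Mathlib

section
/- Every tree-like ball space is chain intersection stable: for every nonempty family F of nonempty chains in 𝓑 such that the family {⋂𝓒 : 𝓒 ∈ F} is itself a chain under inclusion, the union ⋃F is a chain in 𝓑 whose intersection equals ⋂_{𝓒 ∈ F} ⋂𝓒. -/
def IsTreeLike {X : Type*} (B : Set (Set X)) : Prop :=
  ∀ b₁ ∈ B, ∀ b₂ ∈ B, (b₁ ∩ b₂).Nonempty → b₁ ⊆ b₂ ∨ b₂ ⊆ b₁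

theorem IsTreeLike.isChain_of_pairwise_inter_nonempty {X : Type*} {B D : Set (Set X)}
    (hB : IsTreeLike B) (hD : D ⊆ B) (hinter : D.Pairwise fun b₁ b₂ => (b₁ ∩ b₂).Nonempty) :
    IsChain (· ⊆ ·) D :=
  fun _ h₁ _ h₂ hne => hB _ (hD h₁) _ (hD h₂) (hinter h₁ h₂ hne)

theorem IsChain.inter_nonempty {X : Type*} {S : Set (Set X)} (hS : IsChain (· ⊆ ·) S)
    (hne : ∀ s ∈ S, s.Nonempty) {s t : Set X} (hs : s ∈ S) (ht : t ∈ S) : (s ∩ t).Nonempty := by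
  rcases hS.total hs ht with h | h
  · simpa only [Set.inter_eq_left.mpr h] using hne s hs
  · simpa only [Set.inter_eq_right.mpr h] using hne t ht

theorem treelike_chainIntersectionStable_general {X : Type*} (B : Set (Set X))
    (htree : ∀ b₁ ∈ B, ∀ b₂ ∈ B, (b₁ ∩ b₂).Nonempty → b₁ ⊆ b₂ ∨ b₂ ⊆ b₁)
    (F : Set (Set (Set X)))
    (hchains : ∀ C ∈ F, C ⊆ B ∧ C.Nonempty ∧ IsChain (· ⊆ ·) C ∧ (⋂₀ C).Nonempty)
    (hIchain : IsChain (· ⊆ ·) {I | ∃ C ∈ F, I = ⋂₀ C}) :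
    ⋃₀ F ⊆ B ∧ IsChain (· ⊆ ·) (⋃₀ F) ∧ ⋂₀ (⋃₀ F) = ⋂ C ∈ F, ⋂₀ C := by
  have hsub : ⋃₀ F ⊆ B := Set.sUnion_subset fun C hC => (hchains C hC).1
  refine ⟨hsub, IsTreeLike.isChain_of_pairwise_inter_nonempty htree hsub ?_, sInf_sUnion F⟩
  rintro b₁ ⟨C₁, hC₁, hb₁⟩ b₂ ⟨C₂, hC₂, hb₂⟩ -
  -- Both balls contain the intersection of the two comparable, nonempty chain intersections.
  have hI : (⋂₀ C₁ ∩ ⋂₀ C₂).Nonempty :=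
    hIchain.inter_nonempty (by rintro _ ⟨C, hC, rfl⟩; exact (hchains C hC).2.2.2)
      ⟨C₁, hC₁, rfl⟩ ⟨C₂, hC₂, rfl⟩
  exact hI.mono <|
    Set.inter_subset_inter (Set.sInter_subset_of_mem hb₁) (Set.sInter_subset_of_mem hb₂)

/-- Every tree-like ball space is chain intersection stable: for a nonempty family `F`
of nonempty chains in `𝓑` with nonempty intersections, such that the intersections
form a chain, the union `⋃₀ F` is a chain in `𝓑` whose intersection is
`⋂_{𝓒 ∈ F} ⋂ 𝓒`. -/
theorem treelike_chainIntersectionStable {X : Type*} [Nonempty X] (B : Set (Set X))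
    (hBne : B.Nonempty) (hball : ∀ b ∈ B, b.Nonempty)
    (htree : ∀ b₁ ∈ B, ∀ b₂ ∈ B, (b₁ ∩ b₂).Nonempty → b₁ ⊆ b₂ ∨ b₂ ⊆ b₁)
    (F : Set (Set (Set X))) (hF : F.Nonempty)
    (hchains : ∀ C ∈ F, C ⊆ B ∧ C.Nonempty ∧ IsChain (· ⊆ ·) C ∧ (⋂₀ C).Nonempty)
    (hIchain : IsChain (· ⊆ ·) {I | ∃ C ∈ F, I = ⋂₀ C}) :
    ⋃₀ F ⊆ B ∧ IsChain (· ⊆ ·) (⋃₀ F) ∧ ⋂₀ (⋃₀ F) = ⋂ C ∈ F, ⋂₀ C :=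
  treelike_chainIntersectionStable_general B htree F hchains hIchain
end

section
/- With X = (ω+1) × ω and 𝓣 as above, no expansion (X, 𝓑') with 𝓣 ⊆ 𝓑' that is chain intersection closed can be spherically complete. Specifically, each set N_k = {(ω,ℓ) : k ≤ ℓ < ω} is the intersection of the chain {B_{m,k} : m < ω} ⊆ 𝓣, hence lies in 𝓑', and the chain {N_k : k < ω} in 𝓑' has empty intersection. -/
/-- The ball `B_{m,k} = {(n,k) : m ≤ n ≤ ω} ∪ {(ω,ℓ) : k ≤ ℓ < ω}` in
`X = (ω+1) × ω`, modelled as `ℕ∞ × ℕ`. -/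
def Bmk (m k : ℕ) : Set (ℕ∞ × ℕ) :=
  {p | (p.2 = k ∧ (m : ℕ∞) ≤ p.1) ∨ (p.1 = ⊤ ∧ k ≤ p.2)}

/-- The family `𝓣`: all balls `B_{m,k}`, all doubletons `{(ω,k),(ω,ℓ)}` with
`k ≠ ℓ`, and `X` itself. -/
def Tfam : Set (Set (ℕ∞ × ℕ)) :=
  {s | ∃ m k : ℕ, s = Bmk m k} ∪
    {s | ∃ k l : ℕ, k ≠ l ∧ s = {((⊤ : ℕ∞), k), ((⊤ : ℕ∞), l)}} ∪
    {Set.univ}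

/-- `N_k = {(ω,ℓ) : k ≤ ℓ < ω}`. -/
def Nk (k : ℕ) : Set (ℕ∞ × ℕ) := {p | p.1 = ⊤ ∧ k ≤ p.2}

/-!
The balls `B_{m,k}` decrease in `m` towards the tail `N_k` of the column `ω`, so any chain
intersection closed expansion must contain every `N_k`. The `N_k` in turn decrease in `k`
with empty intersection, since every point `(ω, ℓ)` leaves `N_{ℓ+1}`.
-/

section BallSpace

variable {α ι : Type*}

def ChainInterClosed (B : Set (Set α)) : Prop :=
  ∀ C ⊆ B, C.Nonempty → IsChain (· ⊆ ·) C → ⋂₀ C = ∅ ∨ ⋂₀ C ∈ B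

def SphericallyComplete (B : Set (Set α)) : Prop :=
  ∀ C ⊆ B, C.Nonempty → IsChain (· ⊆ ·) C → (⋂₀ C).Nonempty

theorem Set.setOf_exists_eq_eq_range (f : ι → α) : {a | ∃ i, a = f i} = Set.range f := by
  ext a
  simp [eq_comm]

theorem ChainInterClosed.iInter_mem [Nonempty ι] {B : Set (Set α)} (hB : ChainInterClosed B)
    {f : ι → Set α} (hfB : ∀ i, f i ∈ B) (hf : IsChain (· ⊆ ·) (Set.range f))
    (hne : (⋂ i, f i).Nonempty) : ⋂ i, f i ∈ B := by
  have h := hB (Set.range f) (Set.range_subset_iff.2 hfB) (Set.range_nonempty f) hf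
  rw [Set.sInter_range] at h
  exact h.resolve_left hne.ne_empty

theorem SphericallyComplete.iInter_nonempty [Nonempty ι] {B : Set (Set α)}
    (hB : SphericallyComplete B) {f : ι → Set α} (hfB : ∀ i, f i ∈ B)
    (hf : IsChain (· ⊆ ·) (Set.range f)) : (⋂ i, f i).Nonempty := by
  simpa only [Set.sInter_range] using
    hB (Set.range f) (Set.range_subset_iff.2 hfB) (Set.range_nonempty f) hf

end BallSpace

theorem Bmk_mem_Tfam (m k : ℕ) : Bmk m k ∈ Tfam :=
  Or.inl (Or.inl ⟨m, k, rfl⟩)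

theorem antitone_Bmk (k : ℕ) : Antitone fun m => Bmk m k := by
  rintro a b hab p (⟨hp2, hp1⟩ | hp)
  · exact Or.inl ⟨hp2, le_trans (by exact_mod_cast hab) hp1⟩
  · exact Or.inr hp

theorem iInter_Bmk (k : ℕ) : ⋂ m, Bmk m k = Nk k := by
  ext ⟨x, ℓ⟩
  simp only [Set.mem_iInter, Bmk, Nk, Set.mem_ofPred_eq]
  refine ⟨fun h => ?_, fun hp _ => Or.inr hp⟩
  induction x using ENat.recTopCoe with
  | top => exact (h 0).elim (fun h0 => ⟨rfl, h0.1.ge⟩) id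
  | coe n =>
    rcases h (n + 1) with ⟨-, hn⟩ | ⟨hn, -⟩
    · exact absurd (by exact_mod_cast hn : n + 1 ≤ n) n.not_succ_le_self
    · exact absurd hn (ENat.natCast_ne_top n)

theorem Nk_nonempty (k : ℕ) : (Nk k).Nonempty :=
  ⟨(⊤, k), rfl, le_rfl⟩

theorem antitone_Nk : Antitone Nk :=
  fun _ _ hab _ ⟨hp1, hp2⟩ => ⟨hp1, hab.trans hp2⟩

theorem iInter_Nk : ⋂ k, Nk k = ∅ :=
  Set.eq_empty_of_forall_notMem fun p hp =>
    Nat.not_succ_le_self p.2 (Set.mem_iInter.1 hp (p.2 + 1)).2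

/-- No chain intersection closed expansion of `(X, 𝓣)` is spherically complete:
each `N_k` is the intersection of the chain `{B_{m,k} : m < ω} ⊆ 𝓣`, hence lies
in the expansion, and the chain `{N_k : k < ω}` has empty intersection. -/
theorem no_cic_expansion_sphericallyComplete :
    ∀ B' : Set (Set (ℕ∞ × ℕ)), Tfam ⊆ B' →
      (∀ C ⊆ B', C.Nonempty → IsChain (· ⊆ ·) C → ⋂₀ C = ∅ ∨ ⋂₀ C ∈ B') →
      (∀ k : ℕ, ⋂₀ {s | ∃ m : ℕ, s = Bmk m k} = Nk k ∧ Nk k ∈ B') ∧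
      IsChain (· ⊆ ·) {s | ∃ k : ℕ, s = Nk k} ∧
      ⋂₀ {s | ∃ k : ℕ, s = Nk k} = ∅ ∧
      ¬(∀ C ⊆ B', C.Nonempty → IsChain (· ⊆ ·) C → (⋂₀ C).Nonempty) := by
  intro B' hTB hcic
  simp only [Set.setOf_exists_eq_eq_range, Set.sInter_range]
  have hNk_mem (k : ℕ) : Nk k ∈ B' := by
    rw [← iInter_Bmk k]
    exact ChainInterClosed.iInter_mem hcic (fun m => hTB (Bmk_mem_Tfam m k))
      (antitone_Bmk k).isChain_range (iInter_Bmk k ▸ Nk_nonempty k)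
  refine ⟨fun k => ⟨iInter_Bmk k, hNk_mem k⟩, antitone_Nk.isChain_range, iInter_Nk,
    fun hsc => ?_⟩
  exact (SphericallyComplete.iInter_nonempty hsc hNk_mem antitone_Nk.isChain_range).ne_empty
    iInter_Nk
end
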